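/- arXiv:2006.10835 — 2 statements merged into one kernel-verified Lean document; each statement's English description precedes it below -/
import Mathlib

section
/- Under the bounded confidence dynamics x_i' = x̄_i - x_i with x̄_i a convex combination of the positions, the diameter d(t) = max_{i,j} |x_i(t) - x_j(t)| is non-increasing: d(t_2) <= d(t_1) for all t_2 >= t_1. -/
/-!
For every vector `w`, the support function `t ↦ maxₖ ⟪w, xₖ t⟫` is non-increasing: the
derivative of `⟪w, xₖ⟫` is `∑ⱼ aₖⱼ ⟪w, xⱼ⟫ - ⟪w, xₖ⟫`, which is `≤ 0` at every index
attaining the maximum, and a fencing argument turns this into a bound on the right Dini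
derivative of the maximum. So in every direction each point at time `t₂` lies behind some
point at time `t₁`; testing this in the direction `xᵢ t₂ - xⱼ t₂` bounds `|xᵢ t₂ - xⱼ t₂|`
by a distance at time `t₁`.
-/

open Finset Filter Set Topology
open scoped RealInnerProductSpace

theorem eventually_slope_finset_sup'_lt {ι : Type*} {s : Finset ι} (hs : s.Nonempty)
    {f : ι → ℝ → ℝ} {f' : ι → ℝ} {x r : ℝ}
    (hf : ∀ k ∈ s, HasDerivAt (f k) (f' k) x)
    (hr : ∀ k ∈ s, f k x = s.sup' hs (f · x) → f' k < r) :
    ∀ᶠ z in 𝓝[>] x, slope (fun t ↦ s.sup' hs (f · t)) x z < r := by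
  set M := s.sup' hs (f · x)
  have below_line : ∀ k ∈ s, ∀ᶠ z in 𝓝[>] x, f k z < M + r * (z - x) := by
    intro k hk
    rcases (le_sup' (f · x) hk).eq_or_lt with hmax | hlt
    · filter_upwards [(hf k hk).hasDerivWithinAt.limsup_slope_le' (lt_irrefl x) (hr k hk hmax),
        self_mem_nhdsWithin] with z hz hxz
      rw [slope_def_field, div_lt_iff₀ (sub_pos.2 hxz)] at hz
      linarith
    · have hcont : ContinuousAt (fun z ↦ f k z - r * (z - x)) x :=
        (hf k hk).continuousAt.sub (continuousAt_const.mul (continuousAt_id.sub continuousAt_const))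
      have hval : f k x - r * (x - x) < M := by simpa using hlt
      filter_upwards [nhdsWithin_le_nhds (hcont.eventually (gt_mem_nhds hval))] with z hz
      linarith
  filter_upwards [(eventually_all_finset s).2 below_line, self_mem_nhdsWithin] with z hz hxz
  have hsup : s.sup' hs (f · z) < M + r * (z - x) := (sup'_lt_iff hs).2 hz
  rw [slope_def_field, div_lt_iff₀ (sub_pos.2 hxz)]
  linarith

theorem antitoneOn_finset_sup'_of_hasDerivAt {ι : Type*} {s : Finset ι} (hs : s.Nonempty)
    {f f' : ι → ℝ → ℝ} {a b : ℝ}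
    (hf : ∀ k ∈ s, ∀ t ∈ Icc a b, HasDerivAt (f k) (f' k t) t)
    (hf' : ∀ k ∈ s, ∀ t ∈ Icc a b, f k t = s.sup' hs (f · t) → f' k t ≤ 0) :
    AntitoneOn (fun t ↦ s.sup' hs (f · t)) (Icc a b) := by
  intro u hu v hv huv
  have hsub : Icc u v ⊆ Icc a b := Icc_subset_Icc hu.1 hv.2
  have hcont : ContinuousOn (fun t ↦ s.sup' hs (f · t)) (Icc u v) := fun t ht ↦
    (ContinuousAt.finset_sup'_apply hs fun k hk ↦ (hf k hk t (hsub ht)).continuousAt)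
      |>.continuousWithinAt
  refine image_le_of_liminf_slope_right_le_deriv_boundary hcont le_rfl continuousOn_const
    (fun _ _ ↦ hasDerivWithinAt_const _ _ _) (fun t ht r hr ↦ ?_) ⟨huv, le_rfl⟩
  have ht : t ∈ Icc a b := hsub (Ico_subset_Icc_self ht)
  exact (eventually_slope_finset_sup'_lt hs (fun k hk ↦ hf k hk t ht)
    fun k hk hmax ↦ (hf' k hk t ht hmax).trans_lt hr).frequently

section InnerProductSpace

variable {E : Type*} [NormedAddCommGroup E] [InnerProductSpace ℝ E]

theorem exists_dist_le_of_forall_inner_le {ι κ : Type*} {y : ι → E} {z : κ → E}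
    (h : ∀ w i, ∃ k, ⟪w, z i⟫ ≤ ⟪w, y k⟫) (i j : κ) :
    ∃ k l, dist (z i) (z j) ≤ dist (y k) (y l) := by
  set w := z i - z j
  obtain ⟨k, hk⟩ := h w i
  obtain ⟨l, hl⟩ := h (-w) j
  refine ⟨k, l, ?_⟩
  rw [inner_neg_left, inner_neg_left, neg_le_neg_iff] at hl
  have hsq : ‖w‖ * ‖w‖ ≤ ‖w‖ * ‖y k - y l‖ :=
    calc ‖w‖ * ‖w‖ = ⟪w, z i⟫ - ⟪w, z j⟫ := by
          rw [← inner_sub_right, real_inner_self_eq_norm_mul_norm]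
      _ ≤ ⟪w, y k⟫ - ⟪w, y l⟫ := by linarith
      _ = ⟪w, y k - y l⟫ := (inner_sub_right _ _ _).symm
      _ ≤ ‖w‖ * ‖y k - y l‖ := real_inner_le_norm _ _
  rw [dist_eq_norm, dist_eq_norm]
  rcases (norm_nonneg w).eq_or_lt with hw | hw
  · exact hw ▸ norm_nonneg _
  · exact le_of_mul_le_mul_left hsq hw

theorem exists_inner_le_of_hasDerivAt_convex_combination {ι : Type*} [Fintype ι]
    (x : ι → ℝ → E) (a : ℝ → ι → ι → ℝ)
    (ha_nonneg : ∀ t i j, 0 ≤ a t i j) (ha_sum : ∀ t i, ∑ j, a t i j = 1)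
    {t₁ t₂ : ℝ} (hderiv : ∀ i, ∀ t ∈ Icc t₁ t₂,
      HasDerivAt (x i) ((∑ j, a t i j • x j t) - x i t) t)
    (h12 : t₁ ≤ t₂) (w : E) (i : ι) :
    ∃ k, ⟪w, x i t₂⟫ ≤ ⟪w, x k t₁⟫ := by
  have hne : (univ : Finset ι).Nonempty := ⟨i, mem_univ i⟩
  set φ : ι → ℝ → ℝ := fun k t ↦ ⟪w, x k t⟫
  have hφ : ∀ k, ∀ t ∈ Icc t₁ t₂,
      HasDerivAt (φ k) ((∑ j, a t k j * φ j t) - φ k t) t := by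
    intro k t ht
    simpa [φ, inner_sub_right, inner_sum, real_inner_smul_right] using
      (hasDerivAt_const t w).inner ℝ (hderiv k t ht)
  have hφ_max : ∀ k, ∀ t ∈ Icc t₁ t₂, φ k t = univ.sup' hne (φ · t) →
      (∑ j, a t k j * φ j t) - φ k t ≤ 0 := by
    intro k t _ hmax
    have hcomb : ∑ j, a t k j * φ j t ≤ ∑ j, a t k j * φ k t :=
      sum_le_sum fun j _ ↦ mul_le_mul_of_nonneg_left
        (hmax ▸ le_sup' (φ · t) (mem_univ j)) (ha_nonneg t k j)
    rw [← sum_mul, ha_sum t k, one_mul] at hcomb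
    linarith
  obtain ⟨k, -, hk⟩ := exists_mem_eq_sup' hne (φ · t₁)
  refine ⟨k, ?_⟩
  calc φ i t₂ ≤ univ.sup' hne (φ · t₂) := le_sup' (φ · t₂) (mem_univ i)
    _ ≤ univ.sup' hne (φ · t₁) :=
        antitoneOn_finset_sup'_of_hasDerivAt hne (fun k _ ↦ hφ k) (fun k _ ↦ hφ_max k)
          (left_mem_Icc.2 h12) (right_mem_Icc.2 h12) h12
    _ = φ k t₁ := hk

end InnerProductSpace

/-- The diameter of the configuration is non-increasing under the bounded
confidence dynamics. -/
theorem stmt4 {d N : ℕ} (x : Fin N → ℝ → EuclideanSpace ℝ (Fin d))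
    (a : ℝ → Fin N → Fin N → ℝ)
    (ha_nonneg : ∀ t i j, 0 ≤ a t i j)
    (ha_sum : ∀ t i, ∑ j, a t i j = 1)
    (hderiv : ∀ i t, 0 ≤ t →
      HasDerivAt (x i) ((∑ j, a t i j • x j t) - x i t) t)
    (t₁ t₂ : ℝ) (h0 : 0 ≤ t₁) (h12 : t₁ ≤ t₂) :
    (⨆ p : Fin N × Fin N, dist (x p.1 t₂) (x p.2 t₂)) ≤
      ⨆ p : Fin N × Fin N, dist (x p.1 t₁) (x p.2 t₁) := by
  have hbdd : BddAbove (range fun p : Fin N × Fin N ↦ dist (x p.1 t₁) (x p.2 t₁)) :=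
    (finite_range _).bddAbove
  have hsupport := exists_inner_le_of_hasDerivAt_convex_combination x a ha_nonneg ha_sum
    (fun i t ht ↦ hderiv i t (h0.trans ht.1)) h12
  refine Real.iSup_le (fun p ↦ ?_) (Real.iSup_nonneg fun _ ↦ dist_nonneg)
  obtain ⟨k, l, hkl⟩ := exists_dist_le_of_forall_inner_le hsupport p.1 p.2
  exact hkl.trans (le_ciSup hbdd (k, l))
end

section
/- Suppose two agents i, j on the real line evolve so that |x_i(t) - x_j(t)| is non-increasing whenever it lies in [1 - r_*, 1] (with 0 < r_* < 1), and suppose along a sequence t_n → ∞ the distance |x_i(t_n) - x_j(t_n)| converges to a limit L that is not in the open interval (0, 1). If there exists some n with |x_i(t_n) - x_j(t_n)| < 1, then L = 0. -/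
/-!
Fix a level `m` strictly inside the band `[1 - r, 1]` and above the distance at some time `t n₀`.
The distance can never climb above `m` afterwards: at a time where it equals `m` it lies in the
interior of the band, so by continuity it stays in the band for a while and is therefore
non-increasing there (real induction). Hence `L ≤ m < 1`, and `L ∉ (0, 1)` forces `L = 0`.
-/

open Filter Set Topology

def NonincreasingInBand (f : ℝ → ℝ) (a b : ℝ) : Prop :=
  ∀ s t : ℝ, s ≤ t → (∀ u ∈ Icc s t, f u ∈ Icc a b) → f t ≤ f s

theorem NonincreasingInBand.le_of_le {f : ℝ → ℝ} {a b m s₀ : ℝ}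
    (hband : NonincreasingInBand f a b) (hf : Continuous f) (hm : m ∈ Ioo a b)
    (hs₀ : f s₀ ≤ m) {u : ℝ} (hu : s₀ ≤ u) : f u ≤ m := by
  suffices Icc s₀ u ⊆ {y | f y ≤ m} from this ⟨hu, le_rfl⟩
  refine (isClosed_le hf continuous_const).inter isClosed_Icc
    |>.Icc_subset_of_forall_mem_nhdsWithin hs₀ fun x ⟨hx, _⟩ => ?_
  rcases (show f x ≤ m from hx).lt_or_eq with hlt | heq
  · exact mem_nhdsWithin_of_mem_nhds <|
      hf.continuousAt.preimage_mem_nhds (Iic_mem_nhds hlt)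
  · obtain ⟨l, r, hxlr, hlr⟩ := mem_nhds_iff_exists_Ioo_subset.mp <|
      hf.continuousAt.preimage_mem_nhds (Ioo_mem_nhds (heq ▸ hm).1 (heq ▸ hm).2)
    filter_upwards [Ioo_mem_nhdsGT hxlr.2] with y hy
    have hstay : ∀ v ∈ Icc x y, f v ∈ Icc a b := fun v hv =>
      Ioo_subset_Icc_self (hlr ⟨hxlr.1.trans_le hv.1, hv.2.trans_lt hy.2⟩)
    exact heq ▸ hband x y hy.1.le hstay

theorem stmt17_general (xi xj : ℝ → ℝ) (hxi : Continuous xi) (hxj : Continuous xj)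
    (r : ℝ) (hr0 : 0 < r)
    (hmono : ∀ s t : ℝ, s ≤ t →
      (∀ u ∈ Set.Icc s t, |xi u - xj u| ∈ Set.Icc (1 - r) 1) →
      |xi t - xj t| ≤ |xi s - xj s|)
    (t : ℕ → ℝ) (ht : Tendsto t atTop atTop)
    (L : ℝ) (hL : Tendsto (fun n => |xi (t n) - xj (t n)|) atTop (nhds L))
    (hLnot : L ∉ Set.Ioo (0 : ℝ) 1)
    (hbelow : ∃ n, |xi (t n) - xj (t n)| < 1) :
    L = 0 := by
  obtain ⟨n₀, hn₀⟩ := hbelow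
  set m := max |xi (t n₀) - xj (t n₀)| (1 - r / 2)
  have hm : m ∈ Ioo (1 - r) 1 := ⟨by simp only [m, lt_max_iff]; right; linarith,
    max_lt hn₀ (by linarith)⟩
  have hLm : L ≤ m := by
    refine le_of_tendsto hL ?_
    filter_upwards [ht.eventually_ge_atTop (t n₀)] with n hn
    exact NonincreasingInBand.le_of_le hmono (hxi.sub hxj).abs hm (le_max_left _ _) hn
  have hL0 : 0 ≤ L := ge_of_tendsto' hL fun n => abs_nonneg _
  by_contra hne
  exact hLnot ⟨hL0.lt_of_ne' hne, hLm.trans_lt hm.2⟩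

/-- Dichotomy for the limiting distance between connected agents: if the
distance is non-increasing in the critical band `[1 - r, 1]`, its limit along a
sequence of times avoids `(0, 1)`, and it is strictly below `1` at some time,
then the limit is `0`. -/
theorem stmt17 (xi xj : ℝ → ℝ) (hxi : Continuous xi) (hxj : Continuous xj)
    (r : ℝ) (hr0 : 0 < r) (hr1 : r < 1)
    (hmono : ∀ s t : ℝ, s ≤ t →
      (∀ u ∈ Set.Icc s t, |xi u - xj u| ∈ Set.Icc (1 - r) 1) →
      |xi t - xj t| ≤ |xi s - xj s|)
    (t : ℕ → ℝ) (ht : Tendsto t atTop atTop)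
    (L : ℝ) (hL : Tendsto (fun n => |xi (t n) - xj (t n)|) atTop (nhds L))
    (hLnot : L ∉ Set.Ioo (0 : ℝ) 1)
    (hbelow : ∃ n, |xi (t n) - xj (t n)| < 1) :
    L = 0 :=
  stmt17_general xi xj hxi hxj r hr0 hmono t ht L hL hLnot hbelow
end
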